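/- Let n ≥ 1 and let p = (p_n, p_n', q_n, …, p_1, p_1', q_1) ∈ I_n and t = (t_n, t_n', u_n, …, t_1, t_1', u_1) ∈ I_n satisfy p_i + p_i' = t_i + t_i' and q_i = u_i for all i ∈ {1,…,n}. Then w_{p,j} = w_{t,j} and h_{p,j} = h_{t,j} for all j ≥ 0, and the Perron–Frobenius eigenvalues of M_p and M_t coincide: the spectral radius of M_p equals the spectral radius of M_t (both equal 1/w_{p,n}). -/

import Mathlib

open Matrix

noncomputable section

/-- `M1 = [[1,1,0],[0,1,0],[0,0,1]]`. -/
def M1 : Matrix (Fin 3) (Fin 3) ℝ := !![1, 1, 0; 0, 1, 0; 0, 0, 1]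

/-- `M2 = [[1,0,0],[1,1,1],[0,0,1]]`. -/
def M2 : Matrix (Fin 3) (Fin 3) ℝ := !![1, 0, 0; 1, 1, 1; 0, 0, 1]

/-- `M3 = [[1,0,0],[0,1,0],[0,1,1]]`. -/
def M3 : Matrix (Fin 3) (Fin 3) ℝ := !![1, 0, 0; 0, 1, 0; 0, 1, 1]

/- A tuple `p = (p_n, p_n', q_n, …, p_1, p_1', q_1) ∈ ℕ₀^{3n}` is encoded by three
functions `P P' Q : Fin n → ℕ`, where the index `i : Fin n` corresponds to the
subscript `i + 1` (so `P ⟨0,_⟩ = p_1`, …, `P ⟨n-1,_⟩ = p_n`). -/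

/-- The transition matrix `M_p = M1^{p_n} M3^{p_n'} M2^{q_n} ⋯ M1^{p_1} M3^{p_1'} M2^{q_1}`. -/
def Mp (n : ℕ) (P P' Q : Fin n → ℕ) : Matrix (Fin 3) (Fin 3) ℝ :=
  ((List.finRange n).map fun i => M1 ^ P i.rev * M3 ^ P' i.rev * M2 ^ Q i.rev).prod

/-- Membership of the tuple `p` in `I_n`. -/
def memI (n : ℕ) (P P' Q : Fin n → ℕ) : Prop :=
  (∀ i, 0 < Q i) ∧ (∀ i, 0 < P i + P' i) ∧ (∃ j, 0 < P j) ∧ (∃ k, 0 < P' k)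

/-- Finite continued fraction: `cf [a₁, …, a_m] x = 1/(a₁ + 1/(a₂ + ⋯ + 1/(a_m + x)))`. -/
def cf (l : List ℕ) (x : ℝ) : ℝ := l.foldr (fun a y => 1 / (a + y)) x

/-- The (0-indexed) block index `k(j+1) - 1 = n - 1 - (j mod n)` used at step `j + 1`. -/
def blk (n : ℕ) (hn : 0 < n) (j : ℕ) : Fin n :=
  ⟨n - 1 - j % n, lt_of_le_of_lt (Nat.sub_le _ _) (Nat.sub_lt hn one_pos)⟩

/-- The sequence `(a₁, …, a_{2n}) = (p_n + p_n', q_n, …, p_1 + p_1', q_1)` as a list. -/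
def aList (n : ℕ) (hn : 0 < n) (P P' Q : Fin n → ℕ) : List ℕ :=
  (List.range n).flatMap fun i => [P (blk n hn i) + P' (blk n hn i), Q (blk n hn i)]

/-- `isH0 n hn P P' Q h0` says that `h0` is the number `h_{p,0}`: a real number in `(0,1)`
that is a fixed point of `x ↦ 1/(a₁ + 1/(a₂ + ⋯ + 1/(a_{2n} + x)))` (there is exactly one). -/
def isH0 (n : ℕ) (hn : 0 < n) (P P' Q : Fin n → ℕ) (h0 : ℝ) : Prop :=
  h0 ∈ Set.Ioo (0 : ℝ) 1 ∧ cf (aList n hn P P' Q) h0 = h0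

/-- The pair `(w_{p,j}, h_{p,j})`, with `w_{p,0} = 1`, `h_{p,0} = h0`, and for `j ≥ 1`:
`w_{p,j} = w_{p,j-1} − (p_{k(j)} + p'_{k(j)}) h_{p,j-1}`, `h_{p,j} = h_{p,j-1} − q_{k(j)} w_{p,j}`. -/
def wh (n : ℕ) (hn : 0 < n) (P P' Q : Fin n → ℕ) (h0 : ℝ) : ℕ → ℝ × ℝ
  | 0 => (1, h0)
  | j + 1 =>
    let prev := wh n hn P P' Q h0 j
    let b := blk n hn j
    let w := prev.1 - ((P b : ℝ) + (P' b : ℝ)) * prev.2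
    (w, prev.2 - (Q b : ℝ) * w)

/-- The width `w_{p,j}`. -/
def wseq (n : ℕ) (hn : 0 < n) (P P' Q : Fin n → ℕ) (h0 : ℝ) (j : ℕ) : ℝ :=
  (wh n hn P P' Q h0 j).1

/-- The height `h_{p,j}`. -/
def hseq (n : ℕ) (hn : 0 < n) (P P' Q : Fin n → ℕ) (h0 : ℝ) (j : ℕ) : ℝ :=
  (wh n hn P P' Q h0 j).2

/-- The split ratio `s_p = Σ_{i=0}^∞ p_{k(i+1)} h_{p,i}`. -/
def splitRatio (n : ℕ) (hn : 0 < n) (P P' Q : Fin n → ℕ) (h0 : ℝ) : ℝ :=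
  ∑' i : ℕ, (P (blk n hn i) : ℝ) * hseq n hn P P' Q h0 i

/-- The reindexing realizing the shift `T`: the tuple `T(p)` is given by the functions
`P ∘ shiftIdx n hn`, `P' ∘ shiftIdx n hn`, `Q ∘ shiftIdx n hn`. -/
def shiftIdx (n : ℕ) (hn : 0 < n) (i : Fin n) : Fin n :=
  ⟨(i.val + (n - 1)) % n, Nat.mod_lt _ hn⟩

/-!
The continued fraction defining `h_{p,0}` and the recursion for `(w_{p,j}, h_{p,j})` only see
the sums `p_i + p_i'` and the `q_i`. A continued fraction with partial quotients `≥ 1` is a strict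
contraction on `(0, ∞)`, so `h_{p,0} = h_{t,0}` and the two sequences coincide.

The block `M1^p M3^{p'} M2^q` sends `(x, h, z)` to `(x + p h', h', z + p' h')` with
`h' = h + q (x + z)`; on `(x + z, h)` it undoes one step of the `(w, h)` recursion. Writing
`h_{p,j} = w_{p,j} t_j`, where `t_j ∈ (0, 1)` is the tail of the periodic continued fraction, shows
that `w_{p,j}` and `h_{p,j}` stay positive and `w_{p,n} < 1`. Running the recursion backwards from
`(w_{p,n}, h_{p,n}) = w_{p,n} (1, h_{p,0})` therefore gives a positive eigenvector of `M_p` with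
eigenvalue `1 / w_{p,n}`. For a nonnegative matrix, the eigenvalue of a positive eigenvector `v`
is the spectral radius: pairing `|y|` with `v` for a left eigenvector `y` of any eigenvalue `μ`
gives `|μ| ≤ 1 / w_{p,n}`.
-/

namespace Matrix

variable {ι α : Type*} [Fintype ι]

theorem mul_apply_nonneg [Semiring α] [PartialOrder α] [IsOrderedRing α] {A B : Matrix ι ι α}
    (hA : ∀ i j, 0 ≤ A i j) (hB : ∀ i j, 0 ≤ B i j) (i j : ι) : 0 ≤ (A * B) i j :=
  Finset.sum_nonneg fun k _ => mul_nonneg (hA i k) (hB k j)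

variable [DecidableEq ι] [Semiring α]

theorem list_prod_apply_nonneg [PartialOrder α] [IsOrderedRing α] {l : List (Matrix ι ι α)}
    (hl : ∀ A ∈ l, ∀ i j, 0 ≤ A i j) : ∀ i j, 0 ≤ l.prod i j := by
  induction l with
  | nil =>
    intro i j
    rw [List.prod_nil, one_apply]
    split_ifs <;> simp
  | cons A l ih =>
    exact mul_apply_nonneg (hl A List.mem_cons_self)
      (ih fun B hB => hl B (List.mem_cons_of_mem _ hB))

theorem list_prod_map_range_mulVec {f : ℕ → Matrix ι ι α} {v : ℕ → ι → α} {m : ℕ}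
    (h : ∀ j < m, f j *ᵥ v (j + 1) = v j) : ((List.range m).map f).prod *ᵥ v m = v 0 := by
  induction m with
  | zero => simp
  | succ m ih =>
    rw [List.range_succ, List.map_append, List.prod_append, List.map_singleton,
      List.prod_singleton, ← mulVec_mulVec, h m m.lt_succ_self,
      ih fun j hj => h j (hj.trans m.lt_succ_self)]

theorem exists_vecMul_eq_smul_of_mem_spectrum {K : Type*} [Field K] {A : Matrix ι ι K} {μ : K}
    (hμ : μ ∈ spectrum K A) : ∃ y ≠ 0, y ᵥ* A = μ • y := by
  rw [spectrum.mem_iff, isUnit_iff_isUnit_det, isUnit_iff_ne_zero, not_not,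
    ← exists_vecMul_eq_zero_iff] at hμ
  obtain ⟨y, hy0, hy⟩ := hμ
  refine ⟨y, hy0, ?_⟩
  rw [vecMul_sub, Algebra.algebraMap_eq_smul_one, vecMul_smul, vecMul_one, sub_eq_zero] at hy
  exact hy.symm

theorem mem_spectrum_of_mulVec_eq_smul {K : Type*} [Field K] {A : Matrix ι ι K} {μ : K}
    {v : ι → K} (hv : v ≠ 0) (h : A *ᵥ v = μ • v) : μ ∈ spectrum K A := by
  rw [← spectrum_toLin', ← Module.End.hasEigenvalue_iff_mem_spectrum]
  exact Module.End.hasEigenvalue_of_hasEigenvector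
    (Module.End.hasEigenvector_iff.mpr ⟨Module.End.mem_eigenspace_iff.mpr h, hv⟩)

variable {A : Matrix ι ι ℝ} {v : ι → ℝ} {r : ℝ}

theorem norm_le_of_mem_spectrum_map_ofReal (hA : ∀ i j, 0 ≤ A i j) (hv : ∀ i, 0 < v i)
    (hAv : A *ᵥ v = r • v) {μ : ℂ} (hμ : μ ∈ spectrum ℂ (A.map (fun x => (x : ℂ)))) :
    ‖μ‖ ≤ r := by
  obtain ⟨y, hy0, hy⟩ := exists_vecMul_eq_smul_of_mem_spectrum hμ
  set a : ι → ℝ := fun i => ‖y i‖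
  have hcol : ∀ j, ‖μ‖ * a j ≤ (a ᵥ* A) j := fun j => calc
    ‖μ‖ * a j = ‖∑ i, y i * A i j‖ := by
      rw [← norm_mul, ← smul_eq_mul, ← Pi.smul_apply, ← hy]; rfl
    _ ≤ ∑ i, ‖y i * A i j‖ := norm_sum_le _ _
    _ = (a ᵥ* A) j := by
      simp [vecMul, dotProduct, a, abs_of_nonneg (hA _ j)]
  have hpos : 0 < a ⬝ᵥ v := by
    obtain ⟨i, hi⟩ := Function.ne_iff.mp hy0
    exact Finset.sum_pos' (fun j _ => mul_nonneg (norm_nonneg _) (hv j).le)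
      ⟨i, Finset.mem_univ _, mul_pos (norm_pos_iff.mpr hi) (hv i)⟩
  refine le_of_mul_le_mul_right ?_ hpos
  calc ‖μ‖ * (a ⬝ᵥ v) = ∑ j, ‖μ‖ * a j * v j := by
        simp only [dotProduct, Finset.mul_sum, mul_assoc]
    _ ≤ (a ᵥ* A) ⬝ᵥ v :=
      Finset.sum_le_sum fun j _ => mul_le_mul_of_nonneg_right (hcol j) (hv j).le
    _ = r * (a ⬝ᵥ v) := by rw [← dotProduct_mulVec, hAv, dotProduct_smul, smul_eq_mul]

theorem spectralRadius_map_ofReal_eq [Nonempty ι] (hA : ∀ i j, 0 ≤ A i j) (hv : ∀ i, 0 < v i)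
    (hAv : A *ᵥ v = r • v) :
    spectralRadius ℂ (A.map (fun x => (x : ℂ))) = ENNReal.ofReal r := by
  have hr : 0 ≤ r := by
    obtain ⟨i⟩ := ‹Nonempty ι›
    have : 0 ≤ (A *ᵥ v) i := Finset.sum_nonneg fun j _ => mul_nonneg (hA i j) (hv j).le
    rw [hAv, Pi.smul_apply, smul_eq_mul] at this
    exact nonneg_of_mul_nonneg_left this (hv i)
  have hmem : (r : ℂ) ∈ spectrum ℂ (A.map (fun x => (x : ℂ))) := by
    refine mem_spectrum_of_mulVec_eq_smul (v := fun i => (v i : ℂ)) ?_ ?_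
    · obtain ⟨i⟩ := ‹Nonempty ι›
      exact Function.ne_iff.mpr ⟨i, by simpa using (hv i).ne'⟩
    · ext i
      refine (Complex.ofRealHom.map_mulVec A v i).symm.trans ?_
      simp [hAv]
  refine le_antisymm (iSup₂_le fun μ hμ => ?_) ?_
  · rw [← ENNReal.ofReal_coe_nnreal, coe_nnnorm]
    exact ENNReal.ofReal_le_ofReal (norm_le_of_mem_spectrum_map_ofReal hA hv hAv hμ)
  · calc ENNReal.ofReal r = ‖(r : ℂ)‖₊ := by
          rw [← ENNReal.ofReal_coe_nnreal, coe_nnnorm, Complex.norm_real, Real.norm_of_nonneg hr]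
      _ ≤ spectralRadius ℂ (A.map (fun x => (x : ℂ))) :=
        le_iSup₂ (f := fun μ _ => (‖μ‖₊ : ENNReal)) _ hmem

end Matrix

theorem cf_nil (x : ℝ) : cf [] x = x := rfl

theorem cf_cons (a : ℕ) (l : List ℕ) (x : ℝ) : cf (a :: l) x = 1 / (a + cf l x) := rfl

theorem cf_append (l₁ l₂ : List ℕ) (x : ℝ) : cf (l₁ ++ l₂) x = cf l₁ (cf l₂ x) := by
  simp [cf, List.foldr_append]

theorem cf_pos {x : ℝ} (hx : 0 < x) (l : List ℕ) : 0 < cf l x := by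
  induction l with
  | nil => exact hx
  | cons a l ih => rw [cf_cons]; positivity

theorem cf_lt_one {l : List ℕ} (hl : ∀ a ∈ l, 1 ≤ a) {x : ℝ} (hx : 0 < x) (hx1 : x < 1) :
    cf l x < 1 := by
  cases l with
  | nil => exact hx1
  | cons a l =>
    have ha : (1 : ℝ) ≤ a := by exact_mod_cast hl a List.mem_cons_self
    rw [cf_cons, div_lt_one (by linarith [cf_pos hx l])]
    linarith [cf_pos hx l]

theorem abs_one_div_add_sub_one_div_add_lt {a u v : ℝ} (ha : 1 ≤ a) (hu : 0 < u) (hv : 0 < v)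
    (huv : u ≠ v) : |1 / (a + u) - 1 / (a + v)| < |u - v| := by
  have hprod : 1 < (a + u) * (a + v) := by nlinarith
  have : 1 / (a + u) - 1 / (a + v) = (v - u) / ((a + u) * (a + v)) := by
    field_simp
    ring
  rw [this, abs_div, abs_of_pos (by linarith : 0 < (a + u) * (a + v)), abs_sub_comm,
    div_lt_iff₀ (by linarith)]
  nlinarith [abs_pos.mpr (sub_ne_zero.mpr huv)]

theorem abs_cf_sub_le {l : List ℕ} (hl : ∀ a ∈ l, 1 ≤ a) {x y : ℝ} (hx : 0 < x) (hy : 0 < y) :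
    |cf l x - cf l y| ≤ |x - y| := by
  induction l with
  | nil => exact le_rfl
  | cons a l ih =>
    have ih := ih fun b hb => hl b (List.mem_cons_of_mem _ hb)
    rcases eq_or_ne (cf l x) (cf l y) with h | h
    · simp [cf_cons, h]
    · exact (abs_one_div_add_sub_one_div_add_lt (by exact_mod_cast hl a List.mem_cons_self)
        (cf_pos hx l) (cf_pos hy l) h).le.trans ih

theorem abs_cf_sub_lt {l : List ℕ} (hl₀ : l ≠ []) (hl : ∀ a ∈ l, 1 ≤ a) {x y : ℝ} (hx : 0 < x)
    (hy : 0 < y) (hxy : x ≠ y) : |cf l x - cf l y| < |x - y| := by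
  obtain ⟨a, l, rfl⟩ := List.exists_cons_of_ne_nil hl₀
  have htail := abs_cf_sub_le (fun b hb => hl b (List.mem_cons_of_mem _ hb)) hx hy
  rcases eq_or_ne (cf l x) (cf l y) with h | h
  · simpa [cf_cons, h] using sub_ne_zero.mpr hxy
  · exact (abs_one_div_add_sub_one_div_add_lt (by exact_mod_cast hl a List.mem_cons_self)
      (cf_pos hx l) (cf_pos hy l) h).trans_le htail

theorem cf_fixedPoint_unique {l : List ℕ} (hl₀ : l ≠ []) (hl : ∀ a ∈ l, 1 ≤ a) {x y : ℝ}
    (hx : 0 < x) (hy : 0 < y) (hfx : cf l x = x) (hfy : cf l y = y) : x = y := by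
  by_contra hxy
  have := abs_cf_sub_lt hl₀ hl hx hy hxy
  rw [hfx, hfy] at this
  exact lt_irrefl _ this

theorem M1_pow_mulVec (p : ℕ) (x h z : ℝ) : M1 ^ p *ᵥ ![x, h, z] = ![x + p * h, h, z] := by
  induction p with
  | zero => simp
  | succ p ih =>
    rw [pow_succ', ← mulVec_mulVec, ih]
    ext i; fin_cases i <;> simp [M1, mulVec, dotProduct, Fin.sum_univ_three]; ring

theorem M3_pow_mulVec (p' : ℕ) (x h z : ℝ) : M3 ^ p' *ᵥ ![x, h, z] = ![x, h, z + p' * h] := by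
  induction p' with
  | zero => simp
  | succ p' ih =>
    rw [pow_succ', ← mulVec_mulVec, ih]
    ext i; fin_cases i <;> simp [M3, mulVec, dotProduct, Fin.sum_univ_three]; ring

theorem M2_pow_mulVec (q : ℕ) (x h z : ℝ) :
    M2 ^ q *ᵥ ![x, h, z] = ![x, h + q * (x + z), z] := by
  induction q with
  | zero => simp
  | succ q ih =>
    rw [pow_succ', ← mulVec_mulVec, ih]
    ext i; fin_cases i <;> simp [M2, mulVec, dotProduct, Fin.sum_univ_three]; ring

theorem block_mulVec (p p' q : ℕ) (x h z : ℝ) :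
    (M1 ^ p * M3 ^ p' * M2 ^ q) *ᵥ ![x, h, z] =
      ![x + p * (h + q * (x + z)), h + q * (x + z), z + p' * (h + q * (x + z))] := by
  rw [← mulVec_mulVec, ← mulVec_mulVec, M2_pow_mulVec, M3_pow_mulVec, M1_pow_mulVec]

theorem block_apply_nonneg (p p' q : ℕ) : ∀ i j, 0 ≤ (M1 ^ p * M3 ^ p' * M2 ^ q) i j := by
  have h1 : ∀ i j, 0 ≤ M1 i j := by simp [M1, Fin.forall_fin_succ]
  have h2 : ∀ i j, 0 ≤ M2 i j := by simp [M2, Fin.forall_fin_succ]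
  have h3 : ∀ i j, 0 ≤ M3 i j := by simp [M3, Fin.forall_fin_succ]
  exact mul_apply_nonneg (mul_apply_nonneg (pow_apply_nonneg h1 p) (pow_apply_nonneg h3 p'))
    (pow_apply_nonneg h2 q)

theorem Mp_apply_nonneg (n : ℕ) (P P' Q : Fin n → ℕ) : ∀ i j, 0 ≤ Mp n P P' Q i j :=
  list_prod_apply_nonneg fun _ hA => by
    obtain ⟨i, -, rfl⟩ := List.mem_map.mp hA
    exact block_apply_nonneg _ _ _

section WidthHeight

variable {n : ℕ} {hn : 0 < n} {P P' Q : Fin n → ℕ} {h0 : ℝ}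

theorem blk_of_lt {j : ℕ} (hj : j < n) : blk n hn j = (⟨j, hj⟩ : Fin n).rev :=
  Fin.ext <| by simp only [blk, Fin.val_rev, Nat.mod_eq_of_lt hj]; omega

theorem blk_rev (k : Fin n) : blk n hn k.rev = k := by
  rw [blk_of_lt k.rev.isLt, Fin.eta, Fin.rev_rev]

theorem wseq_succ (j : ℕ) :
    wseq n hn P P' Q h0 (j + 1) =
      wseq n hn P P' Q h0 j - (P (blk n hn j) + P' (blk n hn j)) * hseq n hn P P' Q h0 j :=
  rfl

theorem hseq_succ (j : ℕ) :
    hseq n hn P P' Q h0 (j + 1) =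
      hseq n hn P P' Q h0 j - Q (blk n hn j) * wseq n hn P P' Q h0 (j + 1) :=
  rfl

variable {R R' U : Fin n → ℕ}

theorem wh_congr (hsum : ∀ i, P i + P' i = R i + R' i) (hq : ∀ i, Q i = U i) :
    wh n hn P P' Q h0 = wh n hn R R' U h0 := by
  funext j
  induction j with
  | zero => rfl
  | succ j ih =>
    have hsum' : (P (blk n hn j) : ℝ) + P' (blk n hn j) = R (blk n hn j) + R' (blk n hn j) := by
      exact_mod_cast hsum _
    simp only [wh, ih, hsum', hq]

theorem aList_congr (hsum : ∀ i, P i + P' i = R i + R' i) (hq : ∀ i, Q i = U i) :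
    aList n hn P P' Q = aList n hn R R' U := by
  simp only [aList, hsum, hq]

theorem one_le_of_mem_flatMap (hP : memI n P P' Q) {L : List ℕ} :
    ∀ a ∈ L.flatMap (fun i => [P (blk n hn i) + P' (blk n hn i), Q (blk n hn i)]), 1 ≤ a := by
  intro a ha
  obtain ⟨i, -, hi⟩ := List.mem_flatMap.mp ha
  simp only [List.mem_cons, List.not_mem_nil, or_false] at hi
  rcases hi with rfl | rfl
  exacts [hP.2.1 _, hP.1 _]

theorem aList_ne_nil : aList n hn P P' Q ≠ [] :=
  List.ne_nil_of_mem <| List.mem_flatMap.mpr ⟨0, List.mem_range.mpr hn, List.mem_cons_self⟩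

variable (n hn P P' Q h0) in
def cfTail (j : ℕ) : ℝ :=
  cf ((List.range' j (n - j)).flatMap
    fun i => [P (blk n hn i) + P' (blk n hn i), Q (blk n hn i)]) h0

theorem cfTail_zero (hfix : cf (aList n hn P P' Q) h0 = h0) : cfTail n hn P P' Q h0 0 = h0 := by
  rw [cfTail, Nat.sub_zero, ← List.range_eq_range', ← aList, hfix]

theorem cfTail_self : cfTail n hn P P' Q h0 n = h0 := by
  simp [cfTail, cf_nil]

theorem cfTail_of_lt {j : ℕ} (hj : j < n) :
    cfTail n hn P P' Q h0 j =
      1 / ((P (blk n hn j) + P' (blk n hn j) : ℕ) +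
        1 / (Q (blk n hn j) + cfTail n hn P P' Q h0 (j + 1))) := by
  rw [cfTail, show n - j = n - (j + 1) + 1 by omega, List.range'_succ, List.flatMap_cons,
    cf_append, cf_cons, cf_cons, cf_nil]
  rfl

theorem cfTail_mem_Ioo (hP : memI n P P' Q) (hh0 : h0 ∈ Set.Ioo 0 1) (j : ℕ) :
    cfTail n hn P P' Q h0 j ∈ Set.Ioo 0 1 :=
  ⟨cf_pos hh0.1 _, cf_lt_one (one_le_of_mem_flatMap hP) hh0.1 hh0.2⟩

theorem wseq_pos_and_hseq_eq (hP : memI n P P' Q) (hh0 : isH0 n hn P P' Q h0) {j : ℕ}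
    (hj : j ≤ n) :
    0 < wseq n hn P P' Q h0 j ∧
      hseq n hn P P' Q h0 j = wseq n hn P P' Q h0 j * cfTail n hn P P' Q h0 j := by
  induction j with
  | zero => exact ⟨one_pos, by rw [cfTail_zero hh0.2]; exact (one_mul h0).symm⟩
  | succ j ih =>
    obtain ⟨hw, hh⟩ := ih (by omega)
    have ht := cfTail_of_lt (hn := hn) (P := P) (P' := P') (Q := Q) (h0 := h0) (by omega : j < n)
    have hpos := (cfTail_mem_Ioo (hn := hn) hP hh0.1 j).1
    have hpos' := (cfTail_mem_Ioo (hn := hn) hP hh0.1 (j + 1)).1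
    have hq : (1 : ℝ) ≤ Q (blk n hn j) := by exact_mod_cast hP.1 _
    have ha : (0 : ℝ) ≤ P (blk n hn j) + P' (blk n hn j) := by positivity
    rw [wseq_succ, hseq_succ, wseq_succ, hh]
    push_cast at ht ⊢
    generalize wseq n hn P P' Q h0 j = w at *
    generalize cfTail n hn P P' Q h0 j = t at *
    generalize cfTail n hn P P' Q h0 (j + 1) = t' at *
    generalize (P (blk n hn j) : ℝ) + P' (blk n hn j) = a at *
    generalize (Q (blk n hn j) : ℝ) = q at *
    have hqt : 0 < q + t' := by linarith
    have hstep : w - a * (w * t) = w * t / (q + t') := by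
      rw [ht]
      field_simp
      ring
    rw [hstep]
    refine ⟨by positivity, ?_⟩
    field_simp
    ring

theorem hseq_pos (hP : memI n P P' Q) (hh0 : isH0 n hn P P' Q h0) {j : ℕ} (hj : j ≤ n) :
    0 < hseq n hn P P' Q h0 j := by
  obtain ⟨hw, hh⟩ := wseq_pos_and_hseq_eq hP hh0 hj
  rw [hh]
  exact mul_pos hw (cfTail_mem_Ioo hP hh0.1 j).1

theorem wseq_succ_lt (hP : memI n P P' Q) (hh0 : isH0 n hn P P' Q h0) {j : ℕ} (hj : j < n) :
    wseq n hn P P' Q h0 (j + 1) < wseq n hn P P' Q h0 j := by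
  have ha : (1 : ℝ) ≤ P (blk n hn j) + P' (blk n hn j) := by exact_mod_cast hP.2.1 _
  rw [wseq_succ]
  nlinarith [hseq_pos hP hh0 hj.le]

theorem wseq_lt_one (hP : memI n P P' Q) (hh0 : isH0 n hn P P' Q h0) :
    wseq n hn P P' Q h0 n < 1 := by
  suffices ∀ m, 1 ≤ m → m ≤ n → wseq n hn P P' Q h0 m < 1 from this n hn le_rfl
  intro m hm
  induction m, hm using Nat.le_induction with
  | base => exact fun h1 => wseq_succ_lt hP hh0 h1
  | succ m _ ih => exact fun hm => (wseq_succ_lt hP hh0 hm).trans (ih (by omega))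

variable (n hn P P' Q h0) in
def heightSum (W : Fin n → ℕ) (j : ℕ) : ℝ :=
  ∑ i ∈ Finset.Ico j n, (W (blk n hn i) : ℝ) * hseq n hn P P' Q h0 i

theorem heightSum_self (W : Fin n → ℕ) : heightSum n hn P P' Q h0 W n = 0 := by
  simp [heightSum]

theorem heightSum_of_lt (W : Fin n → ℕ) {j : ℕ} (hj : j < n) :
    heightSum n hn P P' Q h0 W j =
      W (blk n hn j) * hseq n hn P P' Q h0 j + heightSum n hn P P' Q h0 W (j + 1) :=
  Finset.sum_eq_sum_Ico_succ_bot hj _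

theorem heightSum_add_heightSum {j : ℕ} (hj : j ≤ n) :
    heightSum n hn P P' Q h0 P j + heightSum n hn P P' Q h0 P' j =
      wseq n hn P P' Q h0 j - wseq n hn P P' Q h0 n := by
  rw [heightSum, heightSum, ← Finset.sum_add_distrib, ← neg_sub, ← Finset.sum_Ico_sub _ hj,
    ← Finset.sum_neg_distrib]
  refine Finset.sum_congr rfl fun i _ => ?_
  rw [wseq_succ]
  ring

theorem heightSum_zero_pos (hP : memI n P P' Q) (hh0 : isH0 n hn P P' Q h0) {W : Fin n → ℕ}
    (hW : ∃ k, 0 < W k) : 0 < heightSum n hn P P' Q h0 W 0 := by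
  obtain ⟨k, hk⟩ := hW
  refine Finset.sum_pos' (fun i hi => ?_)
    ⟨k.rev, Finset.mem_Ico.mpr ⟨k.rev.val.zero_le, k.rev.isLt⟩, ?_⟩
  · exact mul_nonneg (Nat.cast_nonneg _) (hseq_pos hP hh0 (Finset.mem_Ico.mp hi).2.le).le
  · rw [blk_rev]
    exact mul_pos (by exact_mod_cast hk) (hseq_pos hP hh0 k.rev.isLt.le)

variable (n hn P P' Q h0) in
def perronVec (x z : ℝ) (j : ℕ) : Fin 3 → ℝ :=
  ![x + heightSum n hn P P' Q h0 P j, hseq n hn P P' Q h0 j, z + heightSum n hn P P' Q h0 P' j]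

theorem block_mulVec_perronVec {x z : ℝ} (hxz : x + z = wseq n hn P P' Q h0 n) {j : ℕ}
    (hj : j < n) :
    (M1 ^ P (blk n hn j) * M3 ^ P' (blk n hn j) * M2 ^ Q (blk n hn j)) *ᵥ
        perronVec n hn P P' Q h0 x z (j + 1) = perronVec n hn P P' Q h0 x z j := by
  have hh : hseq n hn P P' Q h0 (j + 1) + Q (blk n hn j) *
      (x + heightSum n hn P P' Q h0 P (j + 1) + (z + heightSum n hn P P' Q h0 P' (j + 1))) =
        hseq n hn P P' Q h0 j := by
    rw [hseq_succ]
    linear_combination (Q (blk n hn j) : ℝ) * (hxz + heightSum_add_heightSum hj)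
  rw [perronVec, block_mulVec, hh, perronVec, heightSum_of_lt _ hj, heightSum_of_lt _ hj]
  ext i
  fin_cases i <;> simp <;> ring

theorem Mp_eq_prod_range :
    Mp n P P' Q = ((List.range n).map fun j =>
      M1 ^ P (blk n hn j) * M3 ^ P' (blk n hn j) * M2 ^ Q (blk n hn j)).prod := by
  rw [Mp]
  congr 1
  refine List.ext_getElem (by simp) fun j h₁ _ => ?_
  simp [blk_of_lt (hn := hn) (by simpa using h₁ : j < n)]

theorem Mp_mulVec_perronVec {x z : ℝ} (hxz : x + z = wseq n hn P P' Q h0 n) :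
    Mp n P P' Q *ᵥ perronVec n hn P P' Q h0 x z n = perronVec n hn P P' Q h0 x z 0 := by
  rw [Mp_eq_prod_range (hn := hn)]
  exact list_prod_map_range_mulVec fun j hj => block_mulVec_perronVec hxz hj

end WidthHeight

theorem spectralRadius_Mp {n : ℕ} {hn : 0 < n} {P P' Q : Fin n → ℕ} {h0 : ℝ}
    (hP : memI n P P' Q) (hh0 : isH0 n hn P P' Q h0) :
    spectralRadius ℂ ((Mp n P P' Q).map (fun x => (x : ℂ))) =
      ENNReal.ofReal (1 / wseq n hn P P' Q h0 n) := by
  set w := wseq n hn P P' Q h0 n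
  set D := heightSum n hn P P' Q h0 P 0
  set D' := heightSum n hn P P' Q h0 P' 0
  have hw : 0 < w := (wseq_pos_and_hseq_eq hP hh0 le_rfl).1
  have hw1 : w < 1 := wseq_lt_one hP hh0
  have hD : 0 < D := heightSum_zero_pos hP hh0 hP.2.2.1
  have hD' : 0 < D' := heightSum_zero_pos hP hh0 hP.2.2.2
  have hDD' : D + D' = 1 - w := heightSum_add_heightSum n.zero_le
  have hhn : hseq n hn P P' Q h0 n = w * h0 := by
    rw [(wseq_pos_and_hseq_eq hP hh0 le_rfl).2, cfTail_self]
  -- `x = c D` and `z = c D'` solve `x + D = x / w` and `z + D' = z / w`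
  set c := w / (1 - w)
  have hc : 0 < c := div_pos hw (by linarith)
  have hxz : c * D + c * D' = w := by
    rw [← mul_add, hDD']
    exact div_mul_cancel₀ w (by linarith)
  refine Matrix.spectralRadius_map_ofReal_eq (Mp_apply_nonneg n P P' Q)
    (v := perronVec n hn P P' Q h0 (c * D) (c * D') n) ?_ ?_
  · intro i
    fin_cases i <;> simp [perronVec, heightSum_self, hhn]
    exacts [mul_pos hc hD, mul_pos hw hh0.1.1, mul_pos hc hD']
  · rw [Mp_mulVec_perronVec hxz]
    ext i
    have hc1 : c + 1 = w⁻¹ * c := by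
      simp only [c]
      field_simp [(by linarith : 1 - w ≠ 0)]
      ring
    fin_cases i <;> simp [perronVec, heightSum_self, hhn]
    · linear_combination D * hc1
    · rw [inv_mul_cancel_left₀ hw.ne']
      rfl
    · linear_combination D' * hc1

/-- if `p, t ∈ I_n` satisfy `p_i + p_i' = t_i + t_i'` and `q_i = u_i` for all
`i`, then `w_{p,j} = w_{t,j}` and `h_{p,j} = h_{t,j}` for all `j`, and the spectral radii
of `M_p` and `M_t` coincide, both equal to `1/w_{p,n}`. -/
theorem stmt9 (n : ℕ) (hn : 0 < n) (P P' Q R R' U : Fin n → ℕ)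
    (hP : memI n P P' Q) (hT : memI n R R' U)
    (hsum : ∀ i, P i + P' i = R i + R' i) (hq : ∀ i, Q i = U i)
    (h0p h0t : ℝ) (hh0p : isH0 n hn P P' Q h0p) (hh0t : isH0 n hn R R' U h0t) :
    (∀ j : ℕ,
      wseq n hn P P' Q h0p j = wseq n hn R R' U h0t j ∧
      hseq n hn P P' Q h0p j = hseq n hn R R' U h0t j) ∧
    spectralRadius ℂ ((Mp n P P' Q).map (fun x => (x : ℂ)))
      = spectralRadius ℂ ((Mp n R R' U).map (fun x => (x : ℂ))) ∧
    spectralRadius ℂ ((Mp n P P' Q).map (fun x => (x : ℂ)))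
      = ENNReal.ofReal (1 / wseq n hn P P' Q h0p n) := by
  have hlist := aList_congr (hn := hn) hsum hq
  have h0 : h0p = h0t := cf_fixedPoint_unique aList_ne_nil (one_le_of_mem_flatMap hP)
    hh0p.1.1 hh0t.1.1 hh0p.2 (hlist ▸ hh0t.2)
  have hwh : wh n hn P P' Q h0p = wh n hn R R' U h0t := h0 ▸ wh_congr hsum hq
  refine ⟨fun j => ⟨congrArg (·.1) (congrFun hwh j), congrArg (·.2) (congrFun hwh j)⟩, ?_,
    spectralRadius_Mp hP hh0p⟩
  rw [spectralRadius_Mp hP hh0p, spectralRadius_Mp hT hh0t, wseq, wseq, hwh]
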